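/- For every commutative ring A, every family of weights R : ℤ → A, every m ≥ 1, all g_1, …, g_m ∈ A, every integer n ≥ 0 and every natural number j, the following inversion formula expressing V' in terms of the symmetric quantities Γ̃ holds: V'_{n+j,n−j−1} = Σ_{i=0}^{j} (−1)^{i−1} · Π_{n−j,n+j−1}(i) · Γ̃_{2j−2i}(n) + δ_{j,0} · R_n. -/

import Mathlib

open Finset

variable {A : Type*} [CommRing A]

/-- End height of a walk starting at a given height, with steps given by a list of
Booleans (`true` = ascending step `+1`, `false` = descending step `-1`). -/
def walkEnd : ℤ → List Bool → ℤ
  | a, [] => a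
  | a, true :: s => walkEnd (a + 1) s
  | a, false :: s => walkEnd (a - 1) s

/-- Weight of a walk: the product of `R h` over all descending steps `h → h - 1`. -/
def walkWeight (R : ℤ → A) : ℤ → List Bool → A
  | _, [] => 1
  | a, true :: s => walkWeight R (a + 1) s
  | a, false :: s => R a * walkWeight R (a - 1) s

/-- Whether every height visited by the walk (including the first and last) is `≥ c`. -/
def walkAbove (c : ℤ) : ℤ → List Bool → Bool
  | a, [] => decide (c ≤ a)
  | a, true :: s => decide (c ≤ a) && walkAbove c (a + 1) s
  | a, false :: s => decide (c ≤ a) && walkAbove c (a - 1) s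

/-- `Zw R a b k`: the generating function of walks of length `k` from height `a` to
height `b`, each walk weighted by `R h` per descending step from height `h`. -/
def Zw (R : ℤ → A) (a b : ℤ) (k : ℕ) : A :=
  ∑ s : Fin k → Bool,
    if walkEnd a (List.ofFn s) = b then walkWeight R a (List.ofFn s) else 0

/-- `Zwp R a b k`: the same generating function, restricted to walks staying at
heights `≥ a` ("positive walks"). -/
def Zwp (R : ℤ → A) (a b : ℤ) (k : ℕ) : A :=
  ∑ s : Fin k → Bool,
    if walkEnd a (List.ofFn s) = b ∧ walkAbove a a (List.ofFn s) = true then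
      walkWeight R a (List.ofFn s)
    else 0

/-- `Pdim R a b k`: hard-dimer partition function on the segment `[a,b]`: the sum over
`k`-element subsets `S` of `{a+1, …, b}` with no two consecutive elements of
`∏ i in S, R i` (a dimer on `[i-1,i]` carries weight `R i`). -/
noncomputable def Pdim (R : ℤ → A) (a b : ℤ) (k : ℕ) : A :=
  ∑ S ∈ Finset.powersetCard k (Finset.Icc (a + 1) b),
    if ∀ i ∈ S, i + 1 ∉ S then ∏ i ∈ S, R i else 0

/-- `Vp R g m a b = Σ_{k=1}^{m} g_k • Zw R a b (2k-1)`: grand-canonical generating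
function for walks of odd length from `a` to `b`. -/
def Vp (R : ℤ → A) (g : ℕ → A) (m : ℕ) (a b : ℤ) : A :=
  ∑ k ∈ Finset.Icc 1 m, g k * Zw R a b (2 * k - 1)

/-- The conserved quantities `Γ_{2i}(n)`; `Gam R g m i n` stands for `Γ_{2i}(n)`. -/
def Gam (R : ℤ → A) (g : ℕ → A) (m : ℕ) (i : ℕ) (n : ℤ) : A :=
  if i = 0 then R (n - 1) - Vp R g m (n - 1) (n - 2) + (if n = 0 then 1 else 0)
  else
    Zwp R (n - 1) (n - 1) (2 * i) *
        (R (n - 1) - Vp R g m (n - 1) (n - 2) + (if n = 0 then 1 else 0)) -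
      ∑ j ∈ Finset.Icc 1 i,
        Zwp R (n - 1) (n - 1 + 2 * (j : ℤ)) (2 * i) * Vp R g m (n + 2 * (j : ℤ) - 1) (n - 2)

/-- The symmetric conserved quantities `Γ̃_{2i}(n)`; `Gamt R g m i n` stands
for `Γ̃_{2i}(n)`. -/
def Gamt (R : ℤ → A) (g : ℕ → A) (m : ℕ) (i : ℕ) (n : ℤ) : A :=
  if i = 0 then R n - Vp R g m n (n - 1)
  else
    (Zw R n (n - 1) (2 * i - 1) - R (n - 1) * R (n + 1) * Zw R (n - 2) (n + 1) (2 * i - 1)) *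
        (R n - Vp R g m n (n - 1)) -
      ∑ j ∈ Finset.Icc 1 i,
        (Zw R (n - (j : ℤ)) (n + (j : ℤ) - 1) (2 * i - 1) -
            R (n - (j : ℤ) - 1) * R (n + (j : ℤ) + 1) *
              Zw R (n - (j : ℤ) - 2) (n + (j : ℤ) + 1) (2 * i - 1)) *
          Vp R g m (n + (j : ℤ)) (n - (j : ℤ) - 1)

/-- The master equation: `R i = 0` for `i < 0` and `R n = 1 + V'_{n,n-1}` for `n ≥ 0`. -/
def MasterEq (R : ℤ → A) (g : ℕ → A) (m : ℕ) : Prop :=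
  (∀ i : ℤ, i < 0 → R i = 0) ∧ ∀ n : ℤ, 0 ≤ n → R n = 1 + Vp R g m n (n - 1)

/-- `Zodd R a b i = Zw R a b (2i-1)`, with the convention that for `i = 0`
(walks of length `-1`) it equals `1` if `b = a - 1` and `0` otherwise. -/
def Zodd (R : ℤ → A) (a b : ℤ) (i : ℕ) : A :=
  if i = 0 then (if b = a - 1 then 1 else 0) else Zw R a b (2 * i - 1)

/-- Binomial coefficient with an integer lower index, with the convention that it
vanishes for negative lower index. -/
def Cz (n : ℕ) (p : ℤ) : ℤ := if 0 ≤ p then n.choose p.toNat else 0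

/-!
Let `c i = (-1) ^ i * Pdim R (n - j) (n + j - 1) i`. Writing `Γ̃_{2i}(n) = ∑ₖ W k i * Xₖ` with
`Xₖ = δ_{k0} R n - V'_{n+k,n-k-1}` and a triangular matrix `W` of walk counts (`Gamt_eq_sum`),
the theorem reduces to `∑ᵢ c i * W k (j - i) = δ_{kj}`.

This is an adjugate identity for the transfer matrix `T` of the walks on `[a, b] = [n-j, n+j-1]`.
In a variable `y`, `det (1 - y T)` is the signed dimer polynomial of `[a, b]` evaluated at `y²`,
and `adj (1 - y T)` has explicit entries: products of the dimer polynomials of what is left of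
`[a, b]` on either side of `u` and `v`. Multiplying `(1 - y T)⁻¹ = ∑ y ^ L T ^ L` by the
determinant, `∑ᵢ c i * Z_{u,v}(L - 2i)` is the coefficient of `y ^ L` in `adj (1 - y T)_{u,v}`,
as long as no walk of length `L` from `u` to `v` leaves `[a, b]`. The walk counts entering
`W k (j - i)` all satisfy this, and the resulting coefficients follow from the recurrences of
dimer polynomials and a bound on their degrees.
-/

open Polynomial

section Walks

variable (R : ℤ → A)

lemma Zw_zero (a b : ℤ) : Zw R a b 0 = if a = b then 1 else 0 := by
  simp [Zw, walkEnd, walkWeight]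

lemma Zw_succ (a b : ℤ) (k : ℕ) :
    Zw R a b (k + 1) = Zw R (a + 1) b k + R a * Zw R (a - 1) b k := by
  unfold Zw
  rw [← (Fin.consEquiv fun _ : Fin (k + 1) => Bool).sum_comp, Fintype.sum_prod_type,
    Fintype.sum_bool, mul_sum]
  simp [Fin.consEquiv, List.ofFn_succ, walkEnd, walkWeight]

lemma Zw_eq_zero_of_lt_natAbs {a b : ℤ} {k : ℕ} (h : k < (b - a).natAbs) : Zw R a b k = 0 := by
  induction k generalizing a with
  | zero => rw [Zw_zero, if_neg (by omega)]
  | succ k ih => rw [Zw_succ, ih (by omega), ih (by omega), mul_zero, add_zero]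

end Walks

section DimerPoly

variable (R : ℤ → A)

noncomputable def dimerTerm (S : Finset ℤ) : A[X] :=
  if ∀ i ∈ S, i + 1 ∉ S then ∏ i ∈ S, -(C (R i) * X) else 0

/-- The value `0` for `b < a - 1` (rather than the empty sum `1`) makes `dimerPoly_rec_right`
hold for all `a ≤ b`. -/
noncomputable def dimerPoly (a b : ℤ) : A[X] :=
  if b < a - 1 then 0 else ∑ S ∈ (Icc (a + 1) b).powerset, dimerTerm R S

lemma dimerPoly_eq_zero {a b : ℤ} (h : b < a - 1) : dimerPoly R a b = 0 := if_pos h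

lemma dimerPoly_eq_one {a b : ℤ} (h₁ : a - 1 ≤ b) (h₂ : b ≤ a) : dimerPoly R a b = 1 := by
  rw [dimerPoly, if_neg (by omega), Icc_eq_empty (by omega)]
  simp [dimerTerm]

lemma insert_nonadjacent_iff {S : Finset ℤ} {b : ℤ} (hS : ∀ x ∈ S, x < b) :
    (∀ x ∈ insert b S, x + 1 ∉ insert b S) ↔ (∀ x ∈ S, x + 1 ∉ S) ∧ b - 1 ∉ S := by
  simp only [mem_insert, forall_eq_or_imp, not_or]
  refine ⟨fun ⟨_, h⟩ => ⟨fun x hx => (h x hx).2, fun hb => (h _ hb).1 (by ring)⟩,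
    fun ⟨h, hb⟩ => ⟨⟨by omega, fun hb' => by linarith [hS _ hb']⟩, fun x hx => ⟨?_, h x hx⟩⟩⟩
  rintro rfl
  exact hb (by simpa using hx)

lemma dimerTerm_insert {S : Finset ℤ} {b : ℤ} (hS : ∀ x ∈ S, x < b) :
    dimerTerm R (insert b S) = if b - 1 ∈ S then 0 else -(C (R b) * X) * dimerTerm R S := by
  have hb : b ∉ S := fun h => (hS b h).false
  by_cases hb₁ : b - 1 ∈ S
  · simp only [dimerTerm, insert_nonadjacent_iff hS, hb₁, not_true, and_false, if_false, if_true]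
  · simp only [dimerTerm, insert_nonadjacent_iff hS, hb₁, not_false_eq_true, and_true, if_false,
      prod_insert hb, mul_ite, mul_zero]

lemma dimerPoly_rec_right {a b : ℤ} (h : a ≤ b) :
    dimerPoly R a b = dimerPoly R a (b - 1) - C (R b) * X * dimerPoly R a (b - 2) := by
  rcases h.eq_or_lt with rfl | hab
  · rw [dimerPoly_eq_one R (by omega) le_rfl, dimerPoly_eq_one R le_rfl (by omega),
      dimerPoly_eq_zero R (by omega)]
    ring
  have hinsert : ∑ S ∈ (Icc (a + 1) (b - 1)).powerset, dimerTerm R (insert b S)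
      = -(C (R b) * X) * ∑ S ∈ (Icc (a + 1) (b - 2)).powerset, dimerTerm R S := by
    rw [mul_sum]
    refine (sum_subset (powerset_mono.mpr (Icc_subset_Icc_right (by omega))) ?_).symm.trans
      (sum_congr rfl fun S hS => ?_)
    · intro S hS hS'
      simp only [mem_powerset, subset_iff, mem_Icc, not_forall] at hS hS'
      obtain ⟨x, hx, hx'⟩ := hS'
      obtain rfl : x = b - 1 := by have := hS hx; omega
      rw [dimerTerm_insert R fun y hy => by linarith [(hS hy).2], if_pos hx]
    · simp only [mem_powerset, subset_iff, mem_Icc] at hS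
      rw [dimerTerm_insert R fun y hy => by linarith [(hS hy).2],
        if_neg fun h => by linarith [(hS h).2]]
  rw [dimerPoly, dimerPoly, dimerPoly, if_neg (by omega), if_neg (by omega), if_neg (by omega),
    ← insert_Icc_sub_one_right_eq_Icc (show a + 1 ≤ b by omega), sum_powerset_insert (by simp),
    hinsert]
  ring

/-- Cutting `[a, b]` at the edge `[c, c + 1]`, which is either free or a dimer. -/
lemma dimerPoly_cut {a b c : ℤ} (h₁ : a - 1 ≤ c) (h₂ : c ≤ b) :
    dimerPoly R a b = dimerPoly R a c * dimerPoly R (c + 1) b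
      - C (R (c + 1)) * X * (dimerPoly R a (c - 1) * dimerPoly R (c + 2) b) := by
  obtain ⟨k, rfl⟩ : ∃ k : ℕ, b = c + k := ⟨(b - c).toNat, by omega⟩
  induction k using Nat.twoStepInduction with
  | zero =>
    rw [Nat.cast_zero, add_zero, dimerPoly_eq_one R (a := c + 1) (by omega) (by omega),
      dimerPoly_eq_zero R (a := c + 2) (by omega)]
    ring
  | one =>
    rw [Nat.cast_one, dimerPoly_eq_one R (a := c + 1) (by omega) (by omega),
      dimerPoly_eq_one R (a := c + 2) (by omega) (by omega),
      dimerPoly_rec_right R (b := c + 1) (by omega), add_sub_cancel_right,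
      show c + 1 - 2 = c - 1 by ring]
    ring
  | more k ih₀ ih₁ =>
    have e₁ : c + ((k + 2 : ℕ) : ℤ) - 1 = c + ((k + 1 : ℕ) : ℤ) := by push_cast; ring
    have e₂ : c + ((k + 2 : ℕ) : ℤ) - 2 = c + (k : ℕ) := by push_cast; ring
    rw [dimerPoly_rec_right R (show a ≤ c + ((k + 2 : ℕ) : ℤ) by omega),
      dimerPoly_rec_right R (show c + 1 ≤ c + ((k + 2 : ℕ) : ℤ) by omega),
      dimerPoly_rec_right R (show c + 2 ≤ c + ((k + 2 : ℕ) : ℤ) by omega), e₁, e₂,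
      ih₀ (by omega), ih₁ (by omega)]
    ring

lemma dimerPoly_rec_left {a b : ℤ} (h : a ≤ b) :
    dimerPoly R a b = dimerPoly R (a + 1) b - C (R (a + 1)) * X * dimerPoly R (a + 2) b := by
  rw [dimerPoly_cut R (c := a) (by omega) h, dimerPoly_eq_one R (by omega) le_rfl,
    dimerPoly_eq_one R le_rfl (by omega)]
  ring

/-- The vertex `u` is free or covered by the dimer `[u - 1, u]` or `[u, u + 1]`. -/
lemma dimerPoly_split_at {a b u : ℤ} (ha : a ≤ u) (hb : u ≤ b) :
    dimerPoly R a b = dimerPoly R a (u - 1) * dimerPoly R (u + 1) b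
      - C (R u) * (X * (dimerPoly R a (u - 2) * dimerPoly R (u + 1) b))
      - C (R (u + 1)) * (X * (dimerPoly R a (u - 1) * dimerPoly R (u + 2) b)) := by
  rw [dimerPoly_cut R (c := u) (by omega) hb, dimerPoly_rec_right R ha]
  ring

lemma natDegree_dimerPoly_le (a : ℤ) (k : ℕ) :
    (dimerPoly R a (a + k - 1)).natDegree ≤ k / 2 := by
  induction k using Nat.twoStepInduction with
  | zero => rw [dimerPoly_eq_one R (by omega) (by omega), natDegree_one]
  | one => rw [dimerPoly_eq_one R (by omega) (by omega), natDegree_one]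
  | more k _ ih₁ =>
    rw [dimerPoly_rec_right R (by omega),
      show a + ((k + 2 : ℕ) : ℤ) - 1 - 1 = a + (k + 1 : ℕ) - 1 by push_cast; ring,
      show a + ((k + 2 : ℕ) : ℤ) - 1 - 2 = a + k - 1 by push_cast; ring, mul_assoc]
    refine (natDegree_sub_le _ _).trans (max_le (ih₁.trans (by omega)) ?_)
    calc (C (R _) * (X * dimerPoly R a (a + k - 1))).natDegree
        ≤ (X * dimerPoly R a (a + k - 1)).natDegree := natDegree_C_mul_le _ _
      _ ≤ 1 + (dimerPoly R a (a + k - 1)).natDegree :=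
          natDegree_mul_le.trans (add_le_add_left natDegree_X_le _)
      _ ≤ (k + 2) / 2 := by omega

lemma coeff_zero_dimerPoly {a b : ℤ} (h : a ≤ b + 1) : (dimerPoly R a b).coeff 0 = 1 := by
  obtain ⟨k, rfl⟩ : ∃ k : ℕ, b = a + k - 1 := ⟨(b + 1 - a).toNat, by omega⟩
  induction k using Nat.twoStepInduction with
  | zero => rw [dimerPoly_eq_one R (by omega) (by omega), coeff_one_zero]
  | one => rw [dimerPoly_eq_one R (by omega) (by omega), coeff_one_zero]
  | more k _ ih₁ =>
    rw [dimerPoly_rec_right R (by omega),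
      show a + ((k + 2 : ℕ) : ℤ) - 1 - 1 = a + (k + 1 : ℕ) - 1 by push_cast; ring, coeff_sub,
      ih₁ (by omega)]
    simp

lemma coeff_dimerPoly {a b : ℤ} (h : a ≤ b + 1) (k : ℕ) :
    (dimerPoly R a b).coeff k = (-1) ^ k * Pdim R a b k := by
  have hmon (S : Finset ℤ) :
      ∏ i ∈ S, -(C (R i) * X) = C ((-1) ^ S.card * ∏ i ∈ S, R i) * X ^ S.card := by
    simp only [prod_neg, prod_mul_distrib, prod_const, map_mul, map_pow, map_neg, map_one,
      map_prod]
    ring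
  rw [dimerPoly, if_neg (by omega), finsetSum_coeff, Pdim, powersetCard_eq_filter, sum_filter,
    mul_sum]
  refine sum_congr rfl fun S _ => ?_
  simp only [dimerTerm, apply_ite (coeff · k), hmon, coeff_C_mul_X_pow, coeff_zero]
  split_ifs <;> simp_all

lemma coeff_dimerPoly_mul_eq_zero {a₁ b₁ a₂ b₂ : ℤ} {k₁ k₂ d : ℕ} (h₁ : b₁ = a₁ + k₁ - 1)
    (h₂ : b₂ = a₂ + k₂ - 1) (hd : k₁ / 2 + k₂ / 2 < d) :
    (dimerPoly R a₁ b₁ * dimerPoly R a₂ b₂).coeff d = 0 := by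
  subst h₁ h₂
  have := natDegree_dimerPoly_le R a₁ k₁
  have := natDegree_dimerPoly_le R a₂ k₂
  exact coeff_eq_zero_of_natDegree_lt (natDegree_mul_le.trans_lt (by omega))

lemma coeff_dimerPoly_mul_dimerPoly_add_two {a c e b : ℤ} {d : ℕ} (hc : c = a + d + 1)
    (hb : b = e + d + 1) :
    (dimerPoly R a c * dimerPoly R e b).coeff (d + 2)
      = R c * R (e + 1) * (dimerPoly R a (c - 2) * dimerPoly R (e + 2) b).coeff d := by
  have hac := dimerPoly_rec_right R (show a ≤ c by omega)
  have heb := dimerPoly_rec_left R (show e ≤ b by omega)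
  have key : dimerPoly R a c * dimerPoly R e b
      = dimerPoly R a (c - 1) * dimerPoly R (e + 1) b
        - C (R c) * (X * (dimerPoly R a (c - 2) * dimerPoly R (e + 1) b))
        - C (R (e + 1)) * (X * (dimerPoly R a (c - 1) * dimerPoly R (e + 2) b))
        + C (R c) * (C (R (e + 1))
          * (X * (X * (dimerPoly R a (c - 2) * dimerPoly R (e + 2) b)))) := by
    linear_combination dimerPoly R e b * hac
      + (dimerPoly R a (c - 1) - C (R c) * X * dimerPoly R a (c - 2)) * heb
  rw [key, show d + 2 = d + 1 + 1 from rfl]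
  simp only [coeff_add, coeff_sub, coeff_C_mul, coeff_X_mul]
  rw [coeff_dimerPoly_mul_eq_zero R (k₁ := d + 1) (k₂ := d + 1) (by omega) (by omega) (by omega),
    coeff_dimerPoly_mul_eq_zero R (k₁ := d) (k₂ := d + 1) (by omega) (by omega) (by omega),
    coeff_dimerPoly_mul_eq_zero R (k₁ := d + 1) (k₂ := d) (by omega) (by omega) (by omega)]
  ring

lemma coeff_dimerPoly_add_two {a b u : ℤ} {d : ℕ} (ha : u = a + d + 2) (hb : b = u + d + 1) :
    (dimerPoly R a b).coeff (d + 2)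
      = -(R u * (dimerPoly R a (u - 2) * dimerPoly R (u + 1) b).coeff (d + 1))
        + R (u - 1) * R (u + 1) * (dimerPoly R a (u - 3) * dimerPoly R (u + 2) b).coeff d := by
  have hsplit := dimerPoly_split_at R (show a ≤ u by omega) (show u ≤ b by omega)
  have hrec := dimerPoly_rec_right R (show a ≤ u - 1 by omega)
  rw [show u - 1 - 1 = u - 2 by ring, show u - 1 - 2 = u - 3 by ring] at hrec
  have key : dimerPoly R a b
      = dimerPoly R a (u - 1) * dimerPoly R (u + 1) b
        - C (R u) * (X * (dimerPoly R a (u - 2) * dimerPoly R (u + 1) b))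
        - C (R (u + 1)) * (X * (dimerPoly R a (u - 2) * dimerPoly R (u + 2) b))
        + C (R (u - 1)) * (C (R (u + 1))
          * (X * (X * (dimerPoly R a (u - 3) * dimerPoly R (u + 2) b)))) := by
    linear_combination hsplit - C (R (u + 1)) * X * dimerPoly R (u + 2) b * hrec
  rw [key, show d + 2 = d + 1 + 1 from rfl]
  simp only [coeff_add, coeff_sub, coeff_C_mul, coeff_X_mul]
  rw [coeff_dimerPoly_mul_eq_zero R (k₁ := d + 2) (k₂ := d + 1) (by omega) (by omega) (by omega),
    coeff_dimerPoly_mul_eq_zero R (a₁ := a) (b₁ := u - 2) (a₂ := u + 2) (k₁ := d + 1) (k₂ := d)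
      (by omega) (by omega) (by omega)]
  ring

end DimerPoly

section Transfer

variable (R : ℤ → A) (a b : ℤ)

/-- In the variable `y = X`, the `(u, v)` entry of the adjugate of `1 - y T`, where `T` is the
transfer matrix of the walks on `[a, b]` and `det (1 - y T) = expand A 2 (dimerPoly R a b)`.
`adjPoly_rec` is the corresponding entry of `(1 - y T) * adj (1 - y T) = det (1 - y T)`. -/
noncomputable def adjPoly (u v : ℤ) : A[X] :=
  X ^ (u - v).natAbs * expand A 2
    (C (∏ h ∈ Icc (v + 1) u, R h) * dimerPoly R a (min u v - 1) * dimerPoly R (max u v + 1) b)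

lemma coeff_adjPoly_eq_zero {u v : ℤ} {L : ℕ} (h : L < (u - v).natAbs) :
    (adjPoly R a b u v).coeff L = 0 := by
  rw [adjPoly, coeff_X_pow_mul', if_neg (by omega)]

lemma coeff_adjPoly_of_le {u v : ℤ} (huv : u ≤ v) {L d : ℕ} (hL : L = (v - u).toNat + 2 * d) :
    (adjPoly R a b u v).coeff L = (dimerPoly R a (u - 1) * dimerPoly R (v + 1) b).coeff d := by
  rw [adjPoly, coeff_X_pow_mul', if_pos (by omega), coeff_expand two_pos, if_pos (by omega),
    Icc_eq_empty_of_lt (by omega), prod_empty, map_one, one_mul, min_eq_left huv,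
    max_eq_right huv]
  congr 1
  omega

lemma coeff_adjPoly_of_lt {u v : ℤ} (hvu : v < u) {L d : ℕ} (hL : L = (u - v).toNat + 2 * d) :
    (adjPoly R a b u v).coeff L
      = (∏ h ∈ Icc (v + 1) u, R h) * (dimerPoly R a (v - 1) * dimerPoly R (u + 1) b).coeff d := by
  rw [adjPoly, coeff_X_pow_mul', if_pos (by omega), coeff_expand two_pos, if_pos (by omega),
    min_eq_right hvu.le, max_eq_left hvu.le, mul_assoc, coeff_C_mul]
  congr 2
  omega

lemma adjPoly_rec_of_lt {u v : ℤ} (huv : u < v) (hau : a ≤ u) :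
    adjPoly R a b u v = X * (adjPoly R a b (u + 1) v + C (R u) * adjPoly R a b (u - 1) v) := by
  obtain ⟨D, hD⟩ : ∃ D : ℕ, v - u = D + 1 := ⟨(v - u - 1).toNat, by omega⟩
  rw [adjPoly, adjPoly, adjPoly, min_eq_left huv.le, min_eq_left (show u + 1 ≤ v by omega),
    min_eq_left (show u - 1 ≤ v by omega), max_eq_right huv.le,
    max_eq_right (show u + 1 ≤ v by omega), max_eq_right (show u - 1 ≤ v by omega),
    Icc_eq_empty_of_lt (show u < v + 1 by omega), Icc_eq_empty_of_lt (show u + 1 < v + 1 by omega),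
    Icc_eq_empty_of_lt (show u - 1 < v + 1 by omega), show (u - v).natAbs = D + 1 by omega,
    show (u + 1 - v).natAbs = D by omega, show (u - 1 - v).natAbs = D + 2 by omega,
    add_sub_cancel_right, dimerPoly_rec_right R hau, show u - 1 - 1 = u - 2 by ring]
  simp only [prod_empty, map_one, one_mul, map_mul, map_sub, expand_C, expand_X]
  ring

lemma adjPoly_rec_self {u : ℤ} (hau : a ≤ u) (hub : u ≤ b) :
    adjPoly R a b u u = X * (adjPoly R a b (u + 1) u + C (R u) * adjPoly R a b (u - 1) u)
      + expand A 2 (dimerPoly R a b) := by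
  rw [adjPoly, adjPoly, adjPoly, min_self, max_self, min_eq_right (show u ≤ u + 1 by omega),
    max_eq_left (show u ≤ u + 1 by omega), min_eq_left (show u - 1 ≤ u by omega),
    max_eq_right (show u - 1 ≤ u by omega), Icc_eq_empty_of_lt (show u < u + 1 by omega),
    Icc_self, Icc_eq_empty_of_lt (show u - 1 < u + 1 by omega), sub_self,
    show (u + 1 - u).natAbs = 1 by omega, show (u - 1 - u).natAbs = 1 by omega,
    show u + 1 + 1 = u + 2 by ring, show u - 1 - 1 = u - 2 by ring, dimerPoly_split_at R hau hub]
  simp only [prod_empty, prod_singleton, Int.natAbs_zero, pow_zero, pow_one, map_one, one_mul,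
    map_mul, map_sub, expand_C, expand_X]
  ring

lemma adjPoly_rec_of_gt {u v : ℤ} (hvu : v < u) (hub : u ≤ b) :
    adjPoly R a b u v = X * (adjPoly R a b (u + 1) v + C (R u) * adjPoly R a b (u - 1) v) := by
  obtain ⟨D, hD⟩ : ∃ D : ℕ, u - v = D + 1 := ⟨(u - v - 1).toNat, by omega⟩
  have h₁ : ∏ h ∈ Icc (v + 1) (u + 1), R h = R (u + 1) * ∏ h ∈ Icc (v + 1) u, R h := by
    rw [← insert_Icc_right_eq_Icc_add_one (by omega), prod_insert (by simp)]
  have h₂ : ∏ h ∈ Icc (v + 1) u, R h = R u * ∏ h ∈ Icc (v + 1) (u - 1), R h := by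
    rw [← insert_Icc_sub_one_right_eq_Icc (by omega), prod_insert (by simp)]
  rw [adjPoly, adjPoly, adjPoly, min_eq_right hvu.le, min_eq_right (show v ≤ u + 1 by omega),
    min_eq_right (show v ≤ u - 1 by omega), max_eq_left hvu.le,
    max_eq_left (show v ≤ u + 1 by omega), max_eq_left (show v ≤ u - 1 by omega), h₁, h₂,
    show (u - v).natAbs = D + 1 by omega, show (u + 1 - v).natAbs = D + 2 by omega,
    show (u - 1 - v).natAbs = D by omega, sub_add_cancel, dimerPoly_rec_left R hub,
    show u + 1 + 1 = u + 2 by ring]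
  simp only [map_mul, map_sub, expand_C, expand_X]
  ring

lemma adjPoly_rec {u : ℤ} (v : ℤ) (hau : a ≤ u) (hub : u ≤ b) :
    adjPoly R a b u v = X * (adjPoly R a b (u + 1) v + C (R u) * adjPoly R a b (u - 1) v)
      + if u = v then expand A 2 (dimerPoly R a b) else 0 := by
  rcases lt_trichotomy u v with huv | rfl | hvu
  · rw [if_neg huv.ne, add_zero, adjPoly_rec_of_lt R a b huv hau]
  · rw [if_pos rfl, adjPoly_rec_self R a b hau hub]
  · rw [if_neg hvu.ne', add_zero, adjPoly_rec_of_gt R a b hvu hub]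

lemma coeff_adjPoly_succ {u v : ℤ} {L : ℕ} (h₁ : 2 * a ≤ u + v - (L + 1) + 1)
    (h₂ : u + v + (L + 1) ≤ 2 * b + 1) :
    (adjPoly R a b u v).coeff (L + 1)
      = (adjPoly R a b (u + 1) v).coeff L + R u * (adjPoly R a b (u - 1) v).coeff L
        + if u = v then (expand A 2 (dimerPoly R a b)).coeff (L + 1) else 0 := by
  by_cases hL : L + 1 < (u - v).natAbs
  · rw [coeff_adjPoly_eq_zero R a b hL, coeff_adjPoly_eq_zero R a b (by omega),
      coeff_adjPoly_eq_zero R a b (by omega), if_neg (by omega)]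
    ring
  · rw [adjPoly_rec R a b v (by omega) (by omega)]
    simp only [coeff_add, coeff_X_mul, coeff_C_mul]
    split_ifs <;> simp

noncomputable def walkDimerSum (u v : ℤ) (L : ℕ) : A :=
  ∑ p ∈ range (L + 1), (expand A 2 (dimerPoly R a b)).coeff p * Zw R u v (L - p)

lemma walkDimerSum_succ (u v : ℤ) (L : ℕ) :
    walkDimerSum R a b u v (L + 1)
      = walkDimerSum R a b (u + 1) v L + R u * walkDimerSum R a b (u - 1) v L
        + if u = v then (expand A 2 (dimerPoly R a b)).coeff (L + 1) else 0 := by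
  rw [walkDimerSum, sum_range_succ, Nat.sub_self, Zw_zero, walkDimerSum, walkDimerSum, mul_sum,
    ← sum_add_distrib, mul_ite, mul_one, mul_zero]
  congr 1
  refine sum_congr rfl fun p hp => ?_
  rw [show L + 1 - p = L - p + 1 by have := mem_range.mp hp; omega, Zw_succ]
  ring

/-- The bounds on `u + v` say that no walk of length `L` from `u` to `v` leaves `[a, b]`. -/
theorem walkDimerSum_eq_coeff_adjPoly (L : ℕ) :
    ∀ u v : ℤ, 2 * a ≤ u + v - L + 1 → u + v + L ≤ 2 * b + 1 →
      walkDimerSum R a b u v L = (adjPoly R a b u v).coeff L := by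
  induction L with
  | zero =>
    intro u v h₁ h₂
    rw [walkDimerSum, sum_range_one, coeff_expand two_pos, if_pos (dvd_zero 2), Nat.zero_div,
      coeff_zero_dimerPoly R (by omega), one_mul, Nat.sub_zero, Zw_zero]
    rcases eq_or_ne u v with rfl | huv
    · rw [if_pos rfl, coeff_adjPoly_of_le R a b le_rfl (d := 0) (by simp), mul_coeff_zero,
        coeff_zero_dimerPoly R (by omega), coeff_zero_dimerPoly R (by omega), one_mul]
    · rw [if_neg huv, coeff_adjPoly_eq_zero R a b (by omega)]
  | succ L ih =>
    intro u v h₁ h₂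
    push_cast at h₁ h₂
    rw [walkDimerSum_succ, ih (u + 1) v (by omega) (by omega), ih (u - 1) v (by omega) (by omega),
      coeff_adjPoly_succ R a b h₁ h₂]

end Transfer

section Gamt

variable (R : ℤ → A)

def gamtWeight (n : ℤ) (k i : ℕ) : A :=
  Zodd R (n - k) (n + k - 1) i - R (n - k - 1) * R (n + k + 1) * Zodd R (n - k - 2) (n + k + 1) i

def gamtTerm (g : ℕ → A) (m : ℕ) (n : ℤ) (k : ℕ) : A :=
  (if k = 0 then R n else 0) - Vp R g m (n + k) (n - k - 1)

lemma gamtWeight_eq_zero_of_lt (n : ℤ) {i k : ℕ} (h : i < k) : gamtWeight R n k i = 0 := by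
  rcases i with _ | i
  · simp only [gamtWeight, Zodd, if_true, if_neg (show ¬ n + k - 1 = n - k - 1 by omega),
      if_neg (show ¬ n + k + 1 = n - k - 2 - 1 by omega)]
    ring
  · rw [gamtWeight, Zodd, Zodd, if_neg (by omega), if_neg (by omega),
      Zw_eq_zero_of_lt_natAbs R (by omega), Zw_eq_zero_of_lt_natAbs R (by omega)]
    ring

lemma Gamt_eq_sum (g : ℕ → A) (m : ℕ) (n : ℤ) (i : ℕ) :
    Gamt R g m i n = ∑ k ∈ range (i + 1), gamtWeight R n k i * gamtTerm R g m n k := by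
  rcases i with _ | i
  · simp only [Gamt, gamtWeight, gamtTerm, Zodd, if_true, zero_add, sum_range_one, Nat.cast_zero,
      sub_zero, add_zero, if_neg (show ¬ n + 1 = n - 2 - 1 by omega)]
    ring
  · have hW (k : ℕ) : gamtWeight R n k (i + 1) = Zw R (n - k) (n + k - 1) (2 * (i + 1) - 1)
        - R (n - k - 1) * R (n + k + 1) * Zw R (n - k - 2) (n + k + 1) (2 * (i + 1) - 1) := by
      simp only [gamtWeight, Zodd, if_neg (Nat.succ_ne_zero i)]
    rw [Gamt, if_neg (Nat.succ_ne_zero i), sum_range_succ', ← Ico_add_one_right_eq_Icc,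
      sum_Ico_eq_sum_range, add_tsub_cancel_right, sub_eq_neg_add, ← sum_neg_distrib]
    congr 1
    · refine sum_congr rfl fun k _ => ?_
      rw [hW, gamtTerm, if_neg (Nat.succ_ne_zero k), add_comm 1 k]
      ring
    · simp [hW, gamtTerm]

lemma Gamt_eq_sum_of_le (g : ℕ → A) (m : ℕ) (n : ℤ) {i j : ℕ} (hij : i ≤ j) :
    Gamt R g m i n = ∑ k ∈ range (j + 1), gamtWeight R n k i * gamtTerm R g m n k := by
  rw [Gamt_eq_sum]
  refine sum_subset (range_subset_range.mpr (by omega)) fun k _ hk => ?_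
  rw [gamtWeight_eq_zero_of_lt R n (by simpa using hk), zero_mul]

end Gamt

section Kernel

variable (R : ℤ → A)

lemma sum_range_two_mul_coeff_expand (f : A[X]) (g : ℕ → A) (N : ℕ) :
    ∑ p ∈ range (2 * N), (expand A 2 f).coeff p * g p = ∑ i ∈ range N, f.coeff i * g (2 * i) := by
  induction N with
  | zero => simp
  | succ N ih =>
    rw [show 2 * (N + 1) = 2 * N + 1 + 1 by ring, sum_range_succ, sum_range_succ, ih,
      sum_range_succ, coeff_expand two_pos, coeff_expand two_pos, if_pos (dvd_mul_right 2 N),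
      if_neg (by omega), Nat.mul_div_cancel_left N two_pos]
    ring

lemma sum_coeff_dimerPoly_mul_Zodd (a b u v : ℤ) (J : ℕ) :
    ∑ i ∈ range (J + 2), (dimerPoly R a b).coeff i * Zodd R u v (J + 1 - i)
      = walkDimerSum R a b u v (2 * J + 1)
        + if v = u - 1 then (dimerPoly R a b).coeff (J + 1) else 0 := by
  rw [sum_range_succ, walkDimerSum, show 2 * J + 1 + 1 = 2 * (J + 1) by ring,
    sum_range_two_mul_coeff_expand, Nat.sub_self, Zodd, if_pos rfl, mul_ite, mul_one, mul_zero]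
  congr 1
  refine sum_congr rfl fun i hi => ?_
  have := mem_range.mp hi
  rw [Zodd, if_neg (by omega), show 2 * (J + 1 - i) - 1 = 2 * J + 1 - 2 * i by omega]

lemma coeff_adjPoly_sub_of_pos (n : ℤ) {j k : ℕ} (hk : 1 ≤ k) (hkj : k ≤ j) :
    (adjPoly R (n - j) (n + j - 1) (n - k) (n + k - 1)).coeff (2 * j - 1)
      - R (n - k - 1) * R (n + k + 1)
        * (adjPoly R (n - j) (n + j - 1) (n - k - 2) (n + k + 1)).coeff (2 * j - 1)
      = if k = j then 1 else 0 := by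
  obtain ⟨d, rfl⟩ : ∃ d, j = k + d := ⟨j - k, by omega⟩
  rw [coeff_adjPoly_of_le R _ _ (by omega) (d := d) (by omega)]
  rcases d with _ | _ | d
  · rw [coeff_adjPoly_eq_zero R _ _ (by omega), if_pos (by simp), mul_zero, sub_zero,
      mul_coeff_zero, coeff_zero_dimerPoly R (by omega), coeff_zero_dimerPoly R (by omega),
      one_mul]
  · rw [coeff_adjPoly_eq_zero R _ _ (by omega), if_neg (by omega),
      dimerPoly_eq_one R (a := n - ↑(k + (0 + 1))) (by omega) (by omega),
      dimerPoly_eq_one R (a := n + k - 1 + 1) (by omega) (by omega)]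
    simp [coeff_one]
  · rw [coeff_adjPoly_of_le R _ _ (by omega) (d := d) (by omega),
      coeff_dimerPoly_mul_dimerPoly_add_two R (by omega) (by omega), if_neg (by omega),
      show n + k - 1 + 1 + 1 = n + k + 1 by ring, show n - k - 1 - 2 = n - k - 2 - 1 by ring,
      show n + k - 1 + 1 + 2 = n + k + 1 + 1 by ring, sub_self]

lemma coeff_adjPoly_add_coeff_dimerPoly (n : ℤ) {j : ℕ} (hj : 1 ≤ j) :
    (adjPoly R (n - j) (n + j - 1) n (n - 1)).coeff (2 * j - 1)
      + (dimerPoly R (n - j) (n + j - 1)).coeff j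
      - R (n - 1) * R (n + 1) * (adjPoly R (n - j) (n + j - 1) (n - 2) (n + 1)).coeff (2 * j - 1)
      = 0 := by
  obtain ⟨J, rfl⟩ : ∃ J, j = J + 1 := ⟨j - 1, by omega⟩
  rw [coeff_adjPoly_of_lt R _ _ (show n - 1 < n by omega) (d := J) (by omega),
    show n - 1 + 1 = n by ring, Icc_self, prod_singleton]
  rcases J with _ | d
  · rw [coeff_adjPoly_eq_zero R _ _ (by omega), mul_coeff_zero,
      coeff_zero_dimerPoly R (by omega), coeff_zero_dimerPoly R (by omega)]
    simp only [zero_add, Nat.cast_one, add_sub_cancel_right]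
    rw [dimerPoly_rec_right R (by omega), dimerPoly_eq_one R (a := n - 1) (by omega) le_rfl,
      dimerPoly_eq_one R (a := n - 1) (by omega) (by omega)]
    simp [coeff_one]
  · rw [coeff_adjPoly_of_le R _ _ (by omega) (d := d) (by omega),
      coeff_dimerPoly_add_two R (u := n) (by omega) (by omega), show n - 1 - 1 = n - 2 by ring,
      show n - 2 - 1 = n - 3 by ring, show n + 1 + 1 = n + 2 by ring]
    ring

theorem sum_coeff_dimerPoly_mul_gamtWeight (n : ℤ) {j k : ℕ} (hkj : k ≤ j) :
    ∑ i ∈ range (j + 1), (dimerPoly R (n - j) (n + j - 1)).coeff i * gamtWeight R n k (j - i)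
      = if k = j then 1 else 0 := by
  rcases j with _ | J
  · obtain rfl : k = 0 := by omega
    rw [zero_add, sum_range_one, if_pos rfl, gamtWeight, Zodd, Zodd, if_pos rfl, if_pos rfl,
      if_pos (by simp), if_neg (by simp; omega), coeff_zero_dimerPoly R (by omega)]
    ring
  have hsplit (c : ℕ → A) : ∑ i ∈ range (J + 1 + 1), c i * gamtWeight R n k (J + 1 - i)
      = ∑ i ∈ range (J + 2), c i * Zodd R (n - k) (n + k - 1) (J + 1 - i)
        - R (n - k - 1) * R (n + k + 1)
          * ∑ i ∈ range (J + 2), c i * Zodd R (n - k - 2) (n + k + 1) (J + 1 - i) := by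
    rw [mul_sum, ← sum_sub_distrib]
    refine sum_congr rfl fun i _ => ?_
    rw [gamtWeight]
    ring
  rw [hsplit, sum_coeff_dimerPoly_mul_Zodd, sum_coeff_dimerPoly_mul_Zodd,
    walkDimerSum_eq_coeff_adjPoly R _ _ _ _ _ (by omega) (by omega),
    walkDimerSum_eq_coeff_adjPoly R _ _ _ _ _ (by omega) (by omega),
    if_neg (show ¬ n + k + 1 = n - k - 2 - 1 by omega), add_zero,
    show 2 * J + 1 = 2 * (J + 1) - 1 by omega]
  rcases Nat.eq_zero_or_pos k with rfl | hk
  · rw [if_pos (by simp), if_neg (by omega)]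
    simpa using coeff_adjPoly_add_coeff_dimerPoly R n (j := J + 1) (by omega)
  · rw [if_neg (show ¬ n + k - 1 = n - k - 1 by omega), add_zero]
    exact coeff_adjPoly_sub_of_pos R n hk hkj

end Kernel

theorem stmt_13_general {A : Type*} [CommRing A] (R : ℤ → A) (m : ℕ) (g : ℕ → A)
    (n : ℤ) (j : ℕ) :
    Vp R g m (n + (j : ℤ)) (n - (j : ℤ) - 1) =
      ∑ i ∈ Finset.range (j + 1),
          (-1 : A) ^ (i + 1) * Pdim R (n - (j : ℤ)) (n + (j : ℤ) - 1) i *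
            Gamt R g m (j - i) n +
        (if j = 0 then R n else 0) := by
  set c : ℕ → A := fun i => (dimerPoly R (n - j) (n + j - 1)).coeff i
  have hc (i : ℕ) : c i = (-1) ^ i * Pdim R (n - j) (n + j - 1) i :=
    coeff_dimerPoly R (by omega) i
  have hterm : ∀ i ∈ range (j + 1), (-1 : A) ^ (i + 1) * Pdim R (n - j) (n + j - 1) i
      * Gamt R g m (j - i) n
      = -∑ k ∈ range (j + 1), c i * gamtWeight R n k (j - i) * gamtTerm R g m n k := by
    intro i _
    rw [Gamt_eq_sum_of_le R g m n (Nat.sub_le j i), mul_sum, ← sum_neg_distrib]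
    refine sum_congr rfl fun k _ => ?_
    rw [hc]
    ring
  have hkernel : ∀ k ∈ range (j + 1), ∑ i ∈ range (j + 1), c i * gamtWeight R n k (j - i)
      * gamtTerm R g m n k = if k = j then gamtTerm R g m n j else 0 := by
    intro k hk
    rw [← sum_mul, sum_coeff_dimerPoly_mul_gamtWeight R n (mem_range_succ_iff.mp hk)]
    split_ifs with hkj
    · rw [hkj, one_mul]
    · rw [zero_mul]
  rw [sum_congr rfl hterm, sum_neg_distrib, sum_comm, sum_congr rfl hkernel, sum_ite_eq',
    if_pos (self_mem_range_succ j), gamtTerm]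
  ring

/-- inversion formula expressing `V'` in terms of the symmetric
quantities `Γ̃`. -/
theorem stmt_13 {A : Type*} [CommRing A] (R : ℤ → A) (m : ℕ) (hm : 1 ≤ m) (g : ℕ → A)
    (n : ℤ) (hn : 0 ≤ n) (j : ℕ) :
    Vp R g m (n + (j : ℤ)) (n - (j : ℤ) - 1) =
      ∑ i ∈ Finset.range (j + 1),
          (-1 : A) ^ (i + 1) * Pdim R (n - (j : ℤ)) (n + (j : ℤ) - 1) i *
            Gamt R g m (j - i) n +
        (if j = 0 then R n else 0) :=
  stmt_13_general R m g n j
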